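/- Let B be a commutative ring, let a, b, c ∈ B, and let A = B[X,Y]/(aX² + bXY + cY² − 1). Then A is a smooth B-algebra if and only if both a and c belong to the radical of the ideal (2, b) of B. -/

import Mathlib

open MvPolynomial

/-- The polynomial `a X² + b XY + c Y² - 1` in `B[X,Y]`. -/
noncomputable abbrev quadPoly {B : Type*} [CommRing B] (a b c : B) :
    MvPolynomial (Fin 2) B :=
  C a * X 0 ^ 2 + C b * X 0 * X 1 + C c * X 1 ^ 2 - 1

/-- The ring `A = B[X,Y]/(a X² + b XY + c Y² - 1)`. -/
noncomputable abbrev QuadAlg (B : Type*) [CommRing B] (a b c : B) :=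
  MvPolynomial (Fin 2) B ⧸ Ideal.span {quadPoly a b c}

/-!
Write `P = B[X,Y]` and `f = quadPoly a b c`. A section of `P/(f²) → P/(f)` is the same as a
`B`-algebra endomorphism `φ` of `P` with `φ ≡ id` modulo `f` and `f² ∣ φ f`, so formal smoothness of
`P/(f)` is the existence of such a `φ`. As `f` is quadratic, its Taylor expansion
`φ f = f + ∂₀f·s + ∂₁f·t + (a s² + b s t + c t²)` (with `φ X = X + s`, `φ Y = Y + t`) is exact.

If `(f, ∂₀f, ∂₁f) = 1`, say `u ∂₀f + v ∂₁f ≡ 1 mod f`, the Newton step `X ↦ X - u f`, `Y ↦ Y - v f`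
is such a `φ`. That ideal contains `2` (Euler's identity) and `b`, hence its radical contains `a`
and `c` when they lie in `√(2, b)`, and with them `1 = a X² + c Y² + b XY - f`.

Conversely, modulo a prime `p ∋ 2, b` both partial derivatives of `f` vanish, so the expansion of
`φ f` becomes `F = F² r` for `F = a X² + c Y² - 1` over the domain `B/p`. Then `F` is a unit of
`(B/p)[X,Y]`, hence a constant, which forces `a, c ∈ p`.
-/

namespace Algebra.FormallySmooth

variable {R σ : Type*} [CommRing R]

theorem mvPolynomial_quotient_iff (K : Ideal (MvPolynomial σ R)) :
    FormallySmooth R (MvPolynomial σ R ⧸ K) ↔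
      ∃ φ : MvPolynomial σ R →ₐ[R] MvPolynomial σ R,
        (∀ i, φ (X i) - X i ∈ K) ∧ ∀ p ∈ K, φ p ∈ K ^ 2 := by
  set L := RingHom.ker (Ideal.Quotient.mkₐ R K).toRingHom
  have hL : L = K := Ideal.Quotient.mkₐ_ker R K
  rw [iff_split_surjection _ (Ideal.Quotient.mkₐ_surjective R K)]
  constructor
  · rintro ⟨g, hg⟩
    choose x hx using fun i ↦ Ideal.Quotient.mk_surjective (g (Ideal.Quotient.mk K (X i)))
    have hφ : (Ideal.Quotient.mkₐ R (L ^ 2)).comp (aeval x) = g.comp (Ideal.Quotient.mkₐ R K) :=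
      algHom_ext fun i ↦ by
        simp only [AlgHom.comp_apply, aeval_X, Ideal.Quotient.mkₐ_eq_mk]
        exact hx i
    refine ⟨aeval x, fun i ↦ ?_, fun p hp ↦ ?_⟩
    · rw [← Ideal.Quotient.eq, aeval_X]
      have := congr($hg (Ideal.Quotient.mk K (X i)))
      rwa [AlgHom.comp_apply, ← hx] at this
    · rw [← hL, ← Ideal.Quotient.eq_zero_iff_mem]
      have := congr($hφ p)
      simpa only [AlgHom.comp_apply, Ideal.Quotient.mkₐ_eq_mk,
        Ideal.Quotient.eq_zero_iff_mem.mpr hp, map_zero] using this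
  · rintro ⟨φ, hX, hK⟩
    refine ⟨Ideal.Quotient.liftₐ K ((Ideal.Quotient.mkₐ R (L ^ 2)).comp φ) fun p hp ↦ ?_, ?_⟩
    · rw [AlgHom.comp_apply, Ideal.Quotient.mkₐ_eq_mk, Ideal.Quotient.eq_zero_iff_mem, hL]
      exact hK p hp
    · refine Ideal.Quotient.algHom_ext _ (algHom_ext fun i ↦ ?_)
      change (Ideal.Quotient.mkₐ R K).kerSquareLift (Ideal.Quotient.mk (L ^ 2) (φ (X i))) =
        Ideal.Quotient.mk K (X i)
      rw [AlgHom.kerSquareLift_mk, Ideal.Quotient.mkₐ_eq_mk, Ideal.Quotient.eq]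
      exact hX i

theorem mvPolynomial_quotient_span_singleton_iff (f : MvPolynomial σ R) :
    FormallySmooth R (MvPolynomial σ R ⧸ Ideal.span {f}) ↔
      ∃ φ : MvPolynomial σ R →ₐ[R] MvPolynomial σ R, (∀ i, f ∣ φ (X i) - X i) ∧ f ^ 2 ∣ φ f := by
  simp only [mvPolynomial_quotient_iff, Ideal.span_singleton_pow, Ideal.mem_span_singleton]
  refine exists_congr fun φ ↦ and_congr_right fun _ ↦ ⟨fun h ↦ h f dvd_rfl, ?_⟩
  rintro h _ ⟨r, rfl⟩
  rw [map_mul]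
  exact dvd_mul_of_dvd_left h _

end Algebra.FormallySmooth

section

variable {B : Type*} [CommRing B] (a b c : B)

instance : Algebra.FinitePresentation B (QuadAlg B a b c) :=
  .quotient (Submodule.fg_span_singleton _)

lemma pderiv_zero_quadPoly : pderiv 0 (quadPoly a b c) = 2 * C a * X 0 + C b * X 1 := by
  simp only [map_sub, map_add, Derivation.leibniz, Derivation.leibniz_pow, pderiv_X, derivation_C,
    Derivation.map_one_eq_zero, Pi.single_eq_same, Pi.single_eq_of_ne one_ne_zero, smul_eq_mul,
    nsmul_eq_mul]
  ring

lemma pderiv_one_quadPoly : pderiv 1 (quadPoly a b c) = C b * X 0 + 2 * C c * X 1 := by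
  simp only [map_sub, map_add, Derivation.leibniz, Derivation.leibniz_pow, pderiv_X, derivation_C,
    Derivation.map_one_eq_zero, Pi.single_eq_same, Pi.single_eq_of_ne zero_ne_one, smul_eq_mul,
    nsmul_eq_mul]
  ring

lemma map_quadPoly {B' : Type*} [CommRing B'] (ρ : B →+* B') :
    map ρ (quadPoly a b c) = quadPoly (ρ a) (ρ b) (ρ c) := by
  simp

lemma algHom_apply_quadPoly (φ : MvPolynomial (Fin 2) B →ₐ[B] MvPolynomial (Fin 2) B)
    (s t : MvPolynomial (Fin 2) B) (hs : φ (X 0) = X 0 + s) (ht : φ (X 1) = X 1 + t) :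
    φ (quadPoly a b c) = quadPoly a b c + pderiv 0 (quadPoly a b c) * s +
      pderiv 1 (quadPoly a b c) * t + (C a * s ^ 2 + C b * s * t + C c * t ^ 2) := by
  rw [pderiv_zero_quadPoly, pderiv_one_quadPoly]
  simp only [quadPoly, map_sub, map_add, map_mul, map_pow, map_one, algHom_C, algebraMap_eq, hs,
    ht]
  ring

lemma span_quadPoly_pderiv_eq_top (ha : a ∈ (Ideal.span {(2 : B), b}).radical)
    (hc : c ∈ (Ideal.span {(2 : B), b}).radical) :
    Ideal.span {quadPoly a b c, pderiv 0 (quadPoly a b c), pderiv 1 (quadPoly a b c)} = ⊤ := by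
  set f := quadPoly a b c
  set J := Ideal.span {f, pderiv 0 f, pderiv 1 f}
  have h2 : C 2 ∈ J := Submodule.mem_span_triple.mpr ⟨-2, X 0, X 1, by
    simp only [f, pderiv_zero_quadPoly, pderiv_one_quadPoly, smul_eq_mul, map_ofNat]
    ring⟩
  have hb : C b ∈ J := Submodule.mem_span_triple.mpr
    ⟨-C b, pderiv 1 f - C c * X 1, -C a * X 0, by
      simp only [f, pderiv_zero_quadPoly, pderiv_one_quadPoly, smul_eq_mul]
      ring⟩
  have hrad : (Ideal.span {(2 : B), b}).radical.map C ≤ J.radical :=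
    (Ideal.map_radical_le C).trans <| Ideal.radical_mono <| by
      rw [Ideal.map_span, Ideal.span_le, Set.image_pair, Set.pair_subset_iff]
      exact ⟨h2, hb⟩
  have hf : f ∈ J := Ideal.subset_span (by simp)
  rw [← Ideal.radical_eq_top, Ideal.eq_top_iff_one]
  have h1 : (1 : MvPolynomial (Fin 2) B) =
      C a * X 0 ^ 2 + C c * X 1 ^ 2 + (C b * X 0 * X 1 - f) := by
    ring
  rw [h1]
  refine add_mem (add_mem ?_ ?_) (J.le_radical (sub_mem ?_ hf))
  · exact Ideal.mul_mem_right _ _ (hrad (Ideal.mem_map_of_mem C ha))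
  · exact Ideal.mul_mem_right _ _ (hrad (Ideal.mem_map_of_mem C hc))
  · exact Ideal.mul_mem_right _ _ (Ideal.mul_mem_right _ _ hb)

lemma formallySmooth_of_span_quadPoly_pderiv_eq_top
    (h : Ideal.span {quadPoly a b c, pderiv 0 (quadPoly a b c), pderiv 1 (quadPoly a b c)} = ⊤) :
    Algebra.FormallySmooth B (QuadAlg B a b c) := by
  set f := quadPoly a b c
  obtain ⟨w, u, v, huvw⟩ := Submodule.mem_span_triple.mp (h ▸ Submodule.mem_top (x := 1))
  simp only [smul_eq_mul] at huvw
  refine (Algebra.FormallySmooth.mvPolynomial_quotient_span_singleton_iff f).mpr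
    ⟨aeval ![X 0 - u * f, X 1 - v * f], fun i ↦ ?_, ?_⟩
  · fin_cases i <;> simp
  · rw [algHom_apply_quadPoly a b c _ (-(u * f)) (-(v * f)) (by simp [sub_eq_add_neg]) (by simp [sub_eq_add_neg])]
    exact ⟨w + C a * u ^ 2 + C b * u * v + C c * v ^ 2, by linear_combination (-f) * huvw⟩

lemma eq_zero_of_quadPoly_eq_sq_mul {k : Type*} [CommRing k] [IsDomain k] {a c : k}
    {r : MvPolynomial (Fin 2) k} (h : quadPoly a 0 c = quadPoly a 0 c ^ 2 * r) :
    a = 0 ∧ c = 0 := by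
  set F := quadPoly a 0 c
  have hF : F ≠ 0 := fun h0 ↦ by simpa [F] using congrArg (eval 0) h0
  have hunit : IsUnit F := IsUnit.of_mul_eq_one r <|
    mul_left_cancel₀ hF (by linear_combination -h)
  obtain ⟨z, -, hz⟩ := isUnit_iff_eq_C_of_isReduced.mp hunit
  have e0 : -1 = z := by simpa [F] using congrArg (eval 0) hz
  have e1 : a - 1 = z := by simpa [F] using congrArg (eval (Pi.single 0 1)) hz
  have e2 : c - 1 = z := by simpa [F] using congrArg (eval (Pi.single 1 1)) hz
  exact ⟨by linear_combination e1 - e0, by linear_combination e2 - e0⟩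

lemma mem_of_formallySmooth_quadAlg (hA : Algebra.FormallySmooth B (QuadAlg B a b c))
    (p : Ideal B) [p.IsPrime] (h2 : 2 ∈ p) (hb : b ∈ p) : a ∈ p ∧ c ∈ p := by
  obtain ⟨φ, hX, ⟨q, hq⟩⟩ :=
    (Algebra.FormallySmooth.mvPolynomial_quotient_span_singleton_iff (quadPoly a b c)).mp hA
  obtain ⟨g₀, hg₀⟩ := hX 0
  obtain ⟨g₁, hg₁⟩ := hX 1
  rw [algHom_apply_quadPoly a b c φ _ _ (eq_add_of_sub_eq' hg₀) (eq_add_of_sub_eq' hg₁)] at hq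
  set ρ := Ideal.Quotient.mk p
  have hρb : ρ b = 0 := Ideal.Quotient.eq_zero_iff_mem.mpr hb
  have h2' : (2 : MvPolynomial (Fin 2) (B ⧸ p)) = 0 := by
    rw [← map_ofNat C 2, ← map_ofNat ρ 2, Ideal.Quotient.eq_zero_iff_mem.mpr h2, C_0]
  have hmod := congrArg (map ρ) hq
  simp only [map_add, map_mul, map_pow, map_quadPoly, pderiv_zero_quadPoly, pderiv_one_quadPoly,
    map_C, map_ofNat, hρb, h2', C_0, zero_mul, add_zero] at hmod
  have := eq_zero_of_quadPoly_eq_sq_mul (r := map ρ q - C (ρ a) * map ρ g₀ ^ 2 -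
    C (ρ c) * map ρ g₁ ^ 2) <| by
      -- `ring` must treat `F` as an atom rather than unfold the abbreviation
      set F := quadPoly (ρ a) 0 (ρ c)
      clear_value F
      linear_combination hmod
  exact ⟨Ideal.Quotient.eq_zero_iff_mem.mp this.1, Ideal.Quotient.eq_zero_iff_mem.mp this.2⟩

end

theorem smooth_iff_mem_radical (B : Type*) [CommRing B] (a b c : B) :
    Algebra.Smooth B (QuadAlg B a b c) ↔
      a ∈ (Ideal.span {(2 : B), b}).radical ∧ c ∈ (Ideal.span {(2 : B), b}).radical := by
  refine ⟨fun h ↦ ?_, fun ⟨ha, hc⟩ ↦ ⟨formallySmooth_of_span_quadPoly_pderiv_eq_top a b c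
    (span_quadPoly_pderiv_eq_top a b c ha hc), inferInstance⟩⟩
  have hprime (p : Ideal B) (hp : p ∈ {J | Ideal.span {2, b} ≤ J ∧ J.IsPrime}) :
      a ∈ p ∧ c ∈ p := by
    rw [Set.mem_ofPred_eq, Ideal.span_le, Set.pair_subset_iff] at hp
    obtain ⟨⟨h2, hb⟩, _⟩ := hp
    exact mem_of_formallySmooth_quadAlg a b c h.formallySmooth p h2 hb
  simp only [Ideal.radical_eq_sInf, Ideal.mem_sInf]
  exact ⟨fun p hp ↦ (hprime p hp).1, fun p hp ↦ (hprime p hp).2⟩
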